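/- arXiv:1709.09281 — 2 statements merged into one kernel-verified Lean document; each statement's English description precedes it below -/
import Mathlib

section
/- Scaling limit of positive rational functions: let f = A/B be a ratio of Laurent polynomials with nonnegative coefficients in n variables, and let C ⊂ R^n be an open linearity chamber of the piecewise linear function f^t. Then for (ξ, e^{iν}) ∈ C × (S^1)^n, as s → ∞: (1/s)·log|f(e^{sξ+iν})| → f^t(ξ), and f(e^{sξ+iν})/|f(e^{sξ+iν})| → e^{i(M_1-N_1)(ν)}, where M_1 and N_1 are the exponents of the monomials of A and B achieving the unique maximum on C. -/
open Finset Filter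

/-- Evaluation of a Laurent polynomial with nonnegative rational coefficients at the
point `(e^{sξ₁+iν₁}, …, e^{sξₙ+iνₙ})` of the complex torus. -/
noncomputable def evalExp {n : ℕ} (A : (Fin n → ℤ) →₀ ℚ)
    (ξ : Fin n → ℝ) (ν : Fin n → ℝ) (s : ℝ) : ℂ :=
  ∑ a ∈ A.support, (A a : ℂ) * Complex.exp (∑ i, (a i : ℂ) * (s * ξ i + Complex.I * ν i))

/-- The pairing `⟨a, ξ⟩ = Σ aᵢ ξᵢ`. -/
noncomputable def pairing {n : ℕ} (a : Fin n → ℤ) (ξ : Fin n → ℝ) : ℝ :=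
  ∑ i, (a i : ℝ) * ξ i

/-! At `z = e^{sξ+iν}` every monomial of `A` other than `a₁` is smaller than the leading one by a
factor `e^{-sδ}` with `δ > 0`, so `A(z) = e^{s⟨a₁,ξ⟩ + i⟨a₁,ν⟩} (A_{a₁} + o(1))`, and likewise for `B`.
Hence `f(z) = e^{s f^t(ξ)} u(s)` with `u(s) → e^{i(⟨a₁,ν⟩-⟨b₁,ν⟩)} A_{a₁}/B_{b₁} ≠ 0`. The positive
real factor `e^{s f^t(ξ)}` contributes exactly `f^t(ξ)` to `(1/s) log|f|` and nothing to `f/|f|`;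
positivity of the leading coefficients makes the limiting phase that of the leading monomials. -/

open Topology

lemma evalExp_eq_sum {n : ℕ} (A : (Fin n → ℤ) →₀ ℚ) (ξ ν : Fin n → ℝ) (s : ℝ) :
    evalExp A ξ ν s =
      ∑ a ∈ A.support, (A a : ℂ) * Complex.exp (s * pairing a ξ + Complex.I * pairing a ν) := by
  refine Finset.sum_congr rfl fun a _ => ?_
  congr 2
  simp only [pairing]
  push_cast
  rw [Finset.mul_sum, Finset.mul_sum, ← Finset.sum_add_distrib]
  exact Finset.sum_congr rfl fun i _ => by ring

lemma tendsto_exp_mul_add_I_mul_atTop_of_neg {p : ℝ} (hp : p < 0) (θ : ℝ) :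
    Tendsto (fun s : ℝ => Complex.exp (s * p + Complex.I * θ)) atTop (𝓝 0) := by
  rw [tendsto_zero_iff_norm_tendsto_zero]
  have hnorm : ∀ s : ℝ, ‖Complex.exp (s * p + Complex.I * θ)‖ = Real.exp (s * p) := by
    intro s
    rw [Complex.norm_exp]
    simp
  simp only [hnorm]
  exact Real.tendsto_exp_atBot.comp (tendsto_id.atTop_mul_const_of_neg hp)

lemma tendsto_sum_mul_exp_div_exp_of_lt {ι : Type*} {S : Finset ι} (c : ι → ℂ) (p θ : ι → ℝ)
    {i₁ : ι} (hi₁ : i₁ ∈ S) (hdom : ∀ i ∈ S, i ≠ i₁ → p i < p i₁) :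
    Tendsto (fun s : ℝ => (∑ i ∈ S, c i * Complex.exp (s * p i + Complex.I * θ i)) /
        Complex.exp (s * p i₁ + Complex.I * θ i₁)) atTop (𝓝 (c i₁)) := by
  classical
  have hterm : ∀ i ∈ S, Tendsto (fun s : ℝ =>
      c i * Complex.exp (s * ((p i - p i₁ : ℝ) : ℂ) + Complex.I * ((θ i - θ i₁ : ℝ) : ℂ)))
      atTop (𝓝 (if i = i₁ then c i₁ else 0)) := by
    intro i hi
    split_ifs with h
    · subst h
      simp only [sub_self, Complex.ofReal_zero, mul_zero, add_zero, Complex.exp_zero, mul_one,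
        tendsto_const_nhds]
    · simpa only [mul_zero] using
        (tendsto_exp_mul_add_I_mul_atTop_of_neg (sub_neg.mpr (hdom i hi h)) _).const_mul (c i)
  have hsum := tendsto_finsetSum S hterm
  rw [Finset.sum_ite_eq' S i₁, if_pos hi₁] at hsum
  refine hsum.congr fun s => ?_
  rw [Finset.sum_div]
  refine Finset.sum_congr rfl fun i _ => ?_
  rw [mul_div_assoc, ← Complex.exp_sub]
  push_cast
  ring_nf

lemma tendsto_evalExp_div_exp_leading {n : ℕ} (A : (Fin n → ℤ) →₀ ℚ) (ξ ν : Fin n → ℝ)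
    {a₁ : Fin n → ℤ} (ha₁ : a₁ ∈ A.support)
    (hdom : ∀ a ∈ A.support, a ≠ a₁ → pairing a ξ < pairing a₁ ξ) :
    Tendsto (fun s : ℝ => evalExp A ξ ν s /
        Complex.exp (s * pairing a₁ ξ + Complex.I * pairing a₁ ν)) atTop (𝓝 (A a₁ : ℂ)) := by
  simp only [evalExp_eq_sum]
  exact tendsto_sum_mul_exp_div_exp_of_lt _ (pairing · ξ) (pairing · ν) ha₁ hdom

lemma div_eq_div_mul_div_div_div {K : Type*} [Field K] (a b : K) {X Y : K} (hX : X ≠ 0)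
    (hY : Y ≠ 0) : a / b = X / Y * (a / X / (b / Y)) := by
  rw [div_div_div_eq, div_mul_div_comm, ← mul_div_mul_right a b (mul_ne_zero hX hY)]
  ring

lemma mul_ofReal_div_norm_of_norm_eq_one {z : ℂ} (hz : ‖z‖ = 1) {r : ℝ} (hr : 0 < r) :
    z * r / (‖z * r‖ : ℂ) = z := by
  rw [norm_mul, hz, one_mul, Complex.norm_real, Real.norm_of_nonneg hr.le, mul_div_assoc,
    div_self (Complex.ofReal_ne_zero.mpr hr.ne'), mul_one]

section ExpGrowth

variable {u : ℝ → ℂ} {c : ℂ} (d : ℝ)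

lemma tendsto_inv_mul_log_norm_exp_mul (hu : Tendsto u atTop (𝓝 c)) (hc : c ≠ 0) :
    Tendsto (fun s : ℝ => 1 / s * Real.log ‖(Real.exp (s * d) : ℂ) * u s‖) atTop (𝓝 d) := by
  have hlog : Tendsto (fun s => Real.log ‖u s‖) atTop (𝓝 (Real.log ‖c‖)) :=
    hu.norm.log (norm_ne_zero_iff.mpr hc)
  have hdecay : Tendsto (fun s : ℝ => 1 / s * Real.log ‖u s‖ + d) atTop (𝓝 d) := by
    simpa [one_div] using (tendsto_inv_atTop_zero.mul hlog).add_const d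
  refine hdecay.congr' ?_
  filter_upwards [hu.eventually_ne hc, eventually_gt_atTop 0] with s hus hs
  rw [norm_mul, Complex.norm_real, Real.norm_of_nonneg (Real.exp_pos _).le,
    Real.log_mul (Real.exp_pos _).ne' (norm_ne_zero_iff.mpr hus), Real.log_exp]
  field_simp
  ring

lemma tendsto_exp_mul_div_norm (hu : Tendsto u atTop (𝓝 c)) (hc : c ≠ 0) :
    Tendsto (fun s : ℝ => (Real.exp (s * d) : ℂ) * u s / (‖(Real.exp (s * d) : ℂ) * u s‖ : ℂ))
      atTop (𝓝 (c / ‖c‖)) := by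
  have hdir : Tendsto (fun s => u s / (‖u s‖ : ℂ)) atTop (𝓝 (c / ‖c‖)) :=
    hu.div (Complex.continuous_ofReal.tendsto _ |>.comp hu.norm)
      (Complex.ofReal_ne_zero.mpr (norm_ne_zero_iff.mpr hc))
  refine hdir.congr fun s => ?_
  rw [norm_mul, Complex.norm_real, Real.norm_of_nonneg (Real.exp_pos _).le, Complex.ofReal_mul,
    mul_div_mul_left _ _ (Complex.ofReal_ne_zero.mpr (Real.exp_pos _).ne')]

end ExpGrowth

lemma evalExp_div_evalExp_eq_exp_mul {n : ℕ} (A B : (Fin n → ℤ) →₀ ℚ) (ξ ν : Fin n → ℝ)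
    (a₁ b₁ : Fin n → ℤ) (s : ℝ) :
    evalExp A ξ ν s / evalExp B ξ ν s =
      (Real.exp (s * (pairing a₁ ξ - pairing b₁ ξ)) : ℂ) *
        (Complex.exp (Complex.I * ((pairing a₁ ν : ℂ) - pairing b₁ ν)) *
          (evalExp A ξ ν s / Complex.exp (s * pairing a₁ ξ + Complex.I * pairing a₁ ν) /
            (evalExp B ξ ν s / Complex.exp (s * pairing b₁ ξ + Complex.I * pairing b₁ ν)))) := by
  have hlead : Complex.exp (s * pairing a₁ ξ + Complex.I * pairing a₁ ν) /
      Complex.exp (s * pairing b₁ ξ + Complex.I * pairing b₁ ν) =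
      (Real.exp (s * (pairing a₁ ξ - pairing b₁ ξ)) : ℂ) *
        Complex.exp (Complex.I * ((pairing a₁ ν : ℂ) - pairing b₁ ν)) := by
    rw [Complex.ofReal_exp, ← Complex.exp_add, ← Complex.exp_sub]
    push_cast
    ring_nf
  rw [div_eq_div_mul_div_div_div _ _ (Complex.exp_ne_zero _) (Complex.exp_ne_zero _), hlead,
    mul_assoc]

theorem stmt17_general {n : ℕ} (A B : (Fin n → ℤ) →₀ ℚ)
    (hAp : ∀ a, 0 ≤ A a) (hBp : ∀ a, 0 ≤ B a)
    (ξ ν : Fin n → ℝ) (a₁ b₁ : Fin n → ℤ)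
    (ha₁ : a₁ ∈ A.support) (hb₁ : b₁ ∈ B.support)
    (hdomA : ∀ a ∈ A.support, a ≠ a₁ → pairing a ξ < pairing a₁ ξ)
    (hdomB : ∀ b ∈ B.support, b ≠ b₁ → pairing b ξ < pairing b₁ ξ) :
    Tendsto (fun s : ℝ => (1 / s) * Real.log ‖evalExp A ξ ν s / evalExp B ξ ν s‖)
      atTop (nhds (pairing a₁ ξ - pairing b₁ ξ)) ∧
    Tendsto (fun s : ℝ => (evalExp A ξ ν s / evalExp B ξ ν s) /
        (‖evalExp A ξ ν s / evalExp B ξ ν s‖ : ℂ))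
      atTop (nhds (Complex.exp (Complex.I * ((pairing a₁ ν : ℂ) - pairing b₁ ν)))) := by
  set phase : ℂ := Complex.exp (Complex.I * ((pairing a₁ ν : ℂ) - pairing b₁ ν))
  have hA₁ : 0 < A a₁ := (hAp a₁).lt_of_ne' (Finsupp.mem_support_iff.mp ha₁)
  have hB₁ : 0 < B b₁ := (hBp b₁).lt_of_ne' (Finsupp.mem_support_iff.mp hb₁)
  have hq : (0 : ℝ) < (A a₁ / B b₁ : ℚ) := by exact_mod_cast div_pos hA₁ hB₁
  have hu : Tendsto (fun s : ℝ => phase *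
      (evalExp A ξ ν s / Complex.exp (s * pairing a₁ ξ + Complex.I * pairing a₁ ν) /
        (evalExp B ξ ν s / Complex.exp (s * pairing b₁ ξ + Complex.I * pairing b₁ ν))))
      atTop (𝓝 (phase * ((A a₁ / B b₁ : ℚ) : ℝ))) := by
    push_cast
    exact ((tendsto_evalExp_div_exp_leading A ξ ν ha₁ hdomA).div
      (tendsto_evalExp_div_exp_leading B ξ ν hb₁ hdomB) (by exact_mod_cast hB₁.ne')).const_mul _
  have hphase : ‖phase‖ = 1 := by
    rw [Complex.norm_exp]
    simp
  have hc : phase * ((A a₁ / B b₁ : ℚ) : ℝ) ≠ 0 :=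
    mul_ne_zero (Complex.exp_ne_zero _) (Complex.ofReal_ne_zero.mpr hq.ne')
  have hdir := tendsto_exp_mul_div_norm (pairing a₁ ξ - pairing b₁ ξ) hu hc
  rw [mul_ofReal_div_norm_of_norm_eq_one hphase hq] at hdir
  simp only [evalExp_div_evalExp_eq_exp_mul A B ξ ν a₁ b₁]
  exact ⟨tendsto_inv_mul_log_norm_exp_mul _ hu hc, hdir⟩

/-- Scaling limit of positive rational functions.  Let `f = A/B` with `A, B` Laurent
polynomials with nonnegative coefficients, and let `ξ` lie in an open linearity chamber
of `f^t`, i.e. a single monomial `a₁` of `A` and a single monomial `b₁` of `B` strictly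
dominate at `ξ`.  Then, as `s → ∞`,
`(1/s)·log|f(e^{sξ+iν})| → f^t(ξ) = ⟨a₁,ξ⟩ - ⟨b₁,ξ⟩` and
`f(e^{sξ+iν})/|f(e^{sξ+iν})| → e^{i(⟨a₁,ν⟩ - ⟨b₁,ν⟩)}`. -/
theorem stmt17 {n : ℕ} (A B : (Fin n → ℤ) →₀ ℚ)
    (hA : A ≠ 0) (hB : B ≠ 0) (hAp : ∀ a, 0 ≤ A a) (hBp : ∀ a, 0 ≤ B a)
    (ξ ν : Fin n → ℝ) (a₁ b₁ : Fin n → ℤ)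
    (ha₁ : a₁ ∈ A.support) (hb₁ : b₁ ∈ B.support)
    (hdomA : ∀ a ∈ A.support, a ≠ a₁ → pairing a ξ < pairing a₁ ξ)
    (hdomB : ∀ b ∈ B.support, b ≠ b₁ → pairing b ξ < pairing b₁ ξ) :
    Tendsto (fun s : ℝ => (1 / s) * Real.log ‖evalExp A ξ ν s / evalExp B ξ ν s‖)
      atTop (nhds (pairing a₁ ξ - pairing b₁ ξ)) ∧
    Tendsto (fun s : ℝ => (evalExp A ξ ν s / evalExp B ξ ν s) /
        (‖evalExp A ξ ν s / evalExp B ξ ν s‖ : ℂ))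
      atTop (nhds (Complex.exp (Complex.I * ((pairing a₁ ν : ℂ) - pairing b₁ ν)))) :=
  stmt17_general A B hAp hBp ξ ν a₁ b₁ ha₁ hb₁ hdomA hdomB
end

section
/- For SL_2: every regular function on the Borel subgroup B (with coordinates b_11 ∈ G_m, b_12) that is dominated by the potential Φ(b) = (b_11 + b_11^{-1})/b_12 is a Laurent polynomial of the form Σ_{k≥1} Σ_{l=-k}^{k} c_{kl} b_11^l b_12^{-k} with c_{kl} ≥ 0; and conversely every such nonzero Laurent polynomial is dominated by Φ. -/
open Finset

/-- Formal Laurent polynomials in the two toric coordinates `b₁₁, b₁₂` on the Borel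
subgroup `B ⊂ SL₂` (variable `0` is `b₁₁`, variable `1` is `b₁₂`). -/
abbrev Laurent2 := AddMonoidAlgebra ℚ (Fin 2 → ℤ)

/-- Tropicalization `f^t(ξ) = max{⟨a,ξ⟩ : c_a ≠ 0}` (junk value `0` if `f = 0`). -/
noncomputable def trop (f : Laurent2) (ξ : Fin 2 → ℤ) : ℤ :=
  if h : f.coeff.support.Nonempty then f.coeff.support.sup' h (fun a => ∑ i, a i * ξ i) else 0

/-
A nonzero `f` with support `S` has `f^t(ξ) = max_{a ∈ S} ⟨a, ξ⟩`, so `f` is dominated by `Φ`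
iff every exponent `a ∈ S` pairs negatively with the whole potential cone, i.e. lies in the
interior of its dual cone. That dual condition reads `a₁₂ ≤ -1` and `|a₁₁| ≤ -a₁₂`: the test
point `(0, 1)` forces `a₁₂ < 0`, and the points `(±(n - 1), n)`, with `n` large, approach the
boundary rays of the cone and force `|a₁₁| ≤ -a₁₂`; conversely
`a₁₁ ξ₁₁ + a₁₂ ξ₁₂ ≤ a₁₂ (ξ₁₂ - |ξ₁₁|) < 0`.
-/

lemma trop_lt_zero_iff {f : Laurent2} (hf : f ≠ 0) (ξ : Fin 2 → ℤ) :
    trop f ξ < 0 ↔ ∀ a ∈ f.coeff.support, a 0 * ξ 0 + a 1 * ξ 1 < 0 := by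
  have hne : f.coeff.support.Nonempty :=
    Finsupp.support_nonempty_iff.mpr (AddMonoidAlgebra.coeff_eq_zero.not.mpr hf)
  simp only [trop, dif_pos hne, Finset.sup'_lt_iff, Fin.sum_univ_two]

lemma pairing_neg_of_mem_dualCone {a ξ : Fin 2 → ℤ} (ha : a 1 ≤ -1 ∧ a 1 ≤ a 0 ∧ a 0 ≤ -a 1)
    (hξ : ξ 1 > ξ 0 ∧ ξ 0 > -ξ 1) : a 0 * ξ 0 + a 1 * ξ 1 < 0 := by
  have h_abs : |a 0| ≤ -a 1 := abs_le.mpr ⟨by linarith [ha.2.1], ha.2.2⟩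
  have h_gap : 0 < ξ 1 - |ξ 0| := sub_pos.mpr (abs_lt.mpr ⟨by linarith [hξ.2], hξ.1⟩)
  have h_term : a 0 * ξ 0 ≤ -a 1 * |ξ 0| :=
    calc a 0 * ξ 0 ≤ |a 0| * |ξ 0| := (le_abs_self _).trans (abs_mul _ _).le
      _ ≤ -a 1 * |ξ 0| := by gcongr
  calc a 0 * ξ 0 + a 1 * ξ 1 ≤ -a 1 * |ξ 0| + a 1 * ξ 1 := by linarith
    _ = a 1 * (ξ 1 - |ξ 0|) := by ring
    _ < 0 := mul_neg_of_neg_of_pos (by linarith [ha.1]) h_gap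

lemma mem_dualCone_of_pairing_neg {a : Fin 2 → ℤ}
    (ha : ∀ ξ : Fin 2 → ℤ, ξ 1 > ξ 0 ∧ ξ 0 > -ξ 1 → a 0 * ξ 0 + a 1 * ξ 1 < 0) :
    a 1 ≤ -1 ∧ a 1 ≤ a 0 ∧ a 0 ≤ -a 1 := by
  obtain ⟨n, hn⟩ : ∃ n : ℤ, |a 0| < n := ⟨|a 0| + 1, lt_add_one _⟩
  have habs := abs_lt.mp hn
  have h_axis := ha ![0, 1] (by simp)
  have h_left := ha ![1 - n, n] (by simp; omega)
  have h_right := ha ![n - 1, n] (by simp; omega)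
  simp only [Matrix.cons_val_zero, Matrix.cons_val_one, Matrix.cons_val_fin_one]
    at h_axis h_left h_right
  refine ⟨by omega, ?_, ?_⟩
  · by_contra! h
    nlinarith [mul_le_mul_of_nonneg_left (show a 0 + 1 ≤ a 1 by omega) (show 0 ≤ n by omega)]
  · by_contra! h
    nlinarith [mul_le_mul_of_nonneg_left (show 1 ≤ a 0 + a 1 by omega) (show 0 ≤ n by omega)]

theorem stmt19_general (f : Laurent2) (hf : f ≠ 0) :
    (∀ ξ : Fin 2 → ℤ, (ξ 1 > ξ 0 ∧ ξ 0 > -ξ 1) → trop f ξ < 0) ↔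
    (∀ a ∈ f.coeff.support, a 1 ≤ -1 ∧ a 1 ≤ a 0 ∧ a 0 ≤ -(a 1)) := by
  simp only [trop_lt_zero_iff hf]
  exact ⟨fun h a ha => mem_dualCone_of_pairing_neg fun ξ hξ => h ξ hξ a ha,
    fun h ξ hξ a ha => pairing_neg_of_mem_dualCone (h a ha) hξ⟩

/-- For `SL₂`, with potential `Φ(b) = (b₁₁ + b₁₁⁻¹)/b₁₂` and potential cone
`C_Φ = {(ξ₁₁,ξ₁₂) ∈ ℤ² : ξ₁₂ > ξ₁₁ > -ξ₁₂}`:  a nonzero Laurent polynomial `f` in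
`b₁₁, b₁₂` with nonnegative rational coefficients is dominated by `Φ` (i.e.
`f^t(ξ) < 0` on `C_Φ`) if and only if each of its monomials `b₁₁^l b₁₂^{-k}` satisfies
`k ≥ 1` and `-k ≤ l ≤ k`. -/
theorem stmt19 (f : Laurent2) (hf : f ≠ 0) (hfp : ∀ a, 0 ≤ f.coeff a) :
    (∀ ξ : Fin 2 → ℤ, (ξ 1 > ξ 0 ∧ ξ 0 > -ξ 1) → trop f ξ < 0) ↔
    (∀ a ∈ f.coeff.support, a 1 ≤ -1 ∧ a 1 ≤ a 0 ∧ a 0 ≤ -(a 1)) :=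
  stmt19_general f hf
end
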